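/- Under the coordination algorithm, at the moment a new vehicle A arrives, every vehicle i scheduled to cross after A (the ν-th after A) has state in the set F_ν = {(p, v) : p + v²/(2a_m) ≤ −v_m²/(2a_m) − (ν−1)l}, provided the road length satisfies L ≥ 2v_m²/a_m and the polling policy is regular. Specifically: if the vehicle's previously assigned trajectory reaches the state (−(ν−1)l, v_m) at a time at least 2v_m/a_m after the current time, then its current state lies in F_ν. -/

import Mathlib

/-!
Since the speed changes at rate at most `a_m`, it stays above `v₀ - a_m (t - t₀')` during the
first `v₀/a_m` time units and above `v_m - a_m (T - t)` during the last `v_m/a_m`; integrating,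
these two phases cover at least `v₀²/(2a_m)` and `v_m²/(2a_m)`. A schedule of length
`2v_m/a_m ≥ (v₀ + v_m)/a_m` keeps the phases disjoint, and the speed is nonnegative in between,
so `x T - p₀ ≥ v₀²/(2a_m) + v_m²/(2a_m)`.
-/

open Set

theorem sub_le_sub_of_hasDerivAt_le {f g f' g' : ℝ → ℝ} {a b : ℝ} (hab : a ≤ b)
    (hf : ∀ t ∈ Icc a b, HasDerivAt f (f' t) t) (hg : ∀ t ∈ Icc a b, HasDerivAt g (g' t) t)
    (hle : ∀ t ∈ Icc a b, g' t ≤ f' t) : g b - g a ≤ f b - f a := by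
  have hderiv : ∀ t ∈ Icc a b, HasDerivAt (fun t => f t - g t) (f' t - g' t) t :=
    fun t ht => (hf t ht).sub (hg t ht)
  have hmono : MonotoneOn (fun t => f t - g t) (Icc a b) := by
    refine monotoneOn_of_hasDerivWithinAt_nonneg (convex_Icc a b)
      (fun t ht => (hderiv t ht).continuousAt.continuousWithinAt)
      (fun t ht => (hderiv t (interior_subset ht)).hasDerivWithinAt)
      (fun t ht => sub_nonneg.2 (hle t (interior_subset ht)))
  linarith [hmono (left_mem_Icc.2 hab) (right_mem_Icc.2 hab) hab]

section Kinematics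

variable {x v : ℝ → ℝ} {K : ℝ}

theorem le_of_hasDerivAt_nonneg {a b : ℝ} (hab : a ≤ b)
    (hx : ∀ t ∈ Icc a b, HasDerivAt x (v t) t) (hv : ∀ t ∈ Icc a b, 0 ≤ v t) :
    x a ≤ x b := by
  have := sub_le_sub_of_hasDerivAt_le hab hx (fun t _ => hasDerivAt_const t (0 : ℝ)) hv
  linarith

theorem sq_div_le_sub_of_decel (hK : 0 < K) {a : ℝ} (hva : 0 ≤ v a)
    (hx : ∀ t ∈ Icc a (a + v a / K), HasDerivAt x (v t) t)
    (hv : ∀ t ∈ Icc a (a + v a / K), v a - K * (t - a) ≤ v t) :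
    v a ^ 2 / (2 * K) ≤ x (a + v a / K) - x a := by
  have hW : ∀ t, HasDerivAt (fun t => v a * (t - a) - K * (t - a) ^ 2 / 2)
      (v a - K * (t - a)) t := fun t => by
    have hs := (hasDerivAt_id' t).sub_const a
    exact ((hs.const_mul (v a)).fun_sub ((hs.fun_pow 2).const_mul K |>.div_const 2)).congr_deriv
      (by ring)
  have hab : a ≤ a + v a / K := le_add_of_nonneg_right (div_nonneg hva hK.le)
  convert sub_le_sub_of_hasDerivAt_le hab hx (fun t _ => hW t) hv using 1
  field_simp
  ring

theorem sq_div_le_sub_of_accel (hK : 0 < K) {b : ℝ} (hvb : 0 ≤ v b)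
    (hx : ∀ t ∈ Icc (b - v b / K) b, HasDerivAt x (v t) t)
    (hv : ∀ t ∈ Icc (b - v b / K) b, v b - K * (b - t) ≤ v t) :
    v b ^ 2 / (2 * K) ≤ x b - x (b - v b / K) := by
  have hW : ∀ t, HasDerivAt (fun t => K * (b - t) ^ 2 / 2 - v b * (b - t))
      (v b - K * (b - t)) t := fun t => by
    have hs := (hasDerivAt_id' t).const_sub b
    exact (((hs.fun_pow 2).const_mul K |>.div_const 2).fun_sub (hs.const_mul (v b))).congr_deriv
      (by ring)
  have hab : b - v b / K ≤ b := sub_le_self b (div_nonneg hvb hK.le)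
  convert sub_le_sub_of_hasDerivAt_le hab hx (fun t _ => hW t) hv using 1
  field_simp
  ring

end Kinematics

theorem LipschitzOnWith.sub_mul_abs_le {v : ℝ → ℝ} {K : NNReal} {s : Set ℝ}
    (hv : LipschitzOnWith K v s) {t u : ℝ} (ht : t ∈ s) (hu : u ∈ s) :
    v t - K * |u - t| ≤ v u := by
  have := hv.dist_le_mul t ht u hu
  rw [Real.dist_eq, Real.dist_eq, abs_sub_comm t u] at this
  linarith [neg_abs_le (v t - v u), le_abs_self (v t - v u)]

theorem state_in_F_of_late_schedule_general
    (a_m v_m l t₀' T p₀ v₀ : ℝ) (ν : ℕ)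
    (ha : 0 < a_m) (hvm : 0 < v_m)
    (hT : 2 * v_m / a_m ≤ T - t₀')
    (x v : ℝ → ℝ)
    (hx : ∀ t ∈ Set.Icc t₀' T, HasDerivAt x (v t) t)
    (hLip : LipschitzOnWith (Real.toNNReal a_m) v (Set.Icc t₀' T))
    (hvb : ∀ t ∈ Set.Icc t₀' T, 0 ≤ v t ∧ v t ≤ v_m)
    (hx0 : x t₀' = p₀) (hv0 : v t₀' = v₀)
    (hxT : x T = -(((ν : ℝ) - 1) * l)) (hvT : v T = v_m) :
    p₀ + v₀ ^ 2 / (2 * a_m) ≤ -(v_m ^ 2 / (2 * a_m)) - ((ν : ℝ) - 1) * l := by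
  subst hx0 hv0 hvT
  have hK : (Real.toNNReal a_m : ℝ) = a_m := Real.coe_toNNReal _ ha.le
  have hτ : 0 ≤ v T / a_m := div_nonneg hvm.le ha.le
  have hT' : t₀' ≤ T := by linarith [div_nonneg (mul_nonneg zero_le_two hvm.le) ha.le]
  have h₀ := left_mem_Icc.2 hT'
  have h₁ := right_mem_Icc.2 hT'
  obtain ⟨hv₀, hv₀T⟩ := hvb t₀' h₀
  have hτ₀ : 0 ≤ v t₀' / a_m := div_nonneg hv₀ ha.le
  have h₁₂ : t₀' + v t₀' / a_m ≤ T - v T / a_m := by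
    have := div_le_div_of_nonneg_right hv₀T ha.le
    linarith [show 2 * v T / a_m = v T / a_m + v T / a_m by ring]
  have hsub₁ : Icc t₀' (t₀' + v t₀' / a_m) ⊆ Icc t₀' T := Icc_subset_Icc le_rfl (by linarith)
  have hsub₁₂ : Icc (t₀' + v t₀' / a_m) (T - v T / a_m) ⊆ Icc t₀' T :=
    Icc_subset_Icc (by linarith) (by linarith)
  have hsub₂ : Icc (T - v T / a_m) T ⊆ Icc t₀' T := Icc_subset_Icc (by linarith) le_rfl
  have hbrake := sq_div_le_sub_of_decel ha hv₀ (fun t ht => hx t (hsub₁ ht)) fun t ht => by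
    have := hLip.sub_mul_abs_le h₀ (hsub₁ ht)
    rwa [hK, abs_of_nonneg (sub_nonneg.2 ht.1)] at this
  have hcruise := le_of_hasDerivAt_nonneg h₁₂ (fun t ht => hx t (hsub₁₂ ht))
    fun t ht => (hvb t (hsub₁₂ ht)).1
  have haccel := sq_div_le_sub_of_accel ha hvm.le (fun t ht => hx t (hsub₂ ht)) fun t ht => by
    have := hLip.sub_mul_abs_le h₁ (hsub₂ ht)
    rwa [hK, abs_sub_comm, abs_of_nonneg (sub_nonneg.2 ht.2)] at this
  linarith

/-- **Vehicles scheduled after a new arrival lie in `F_ν`.**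
Double integrator `ẍ = u`, `|u| ≤ a_m` (encoded by `v` being `a_m`-Lipschitz),
`ẋ ∈ [0, v_m]`, vehicle length `l > 0`, road length `L ≥ 2 v_m²/a_m`.  Suppose the
`ν`-th vehicle after the newly arrived vehicle `A` has current state `(p₀, v₀)` at the
arrival time `t₀'` and follows a feasible trajectory arriving at the state
`I_ν = (−(ν−1)l, v_m)` at a time `T` with `T − t₀' ≥ 2 v_m/a_m` (as guaranteed by the
regular polling policy and the road-length assumption).  Then
`(p₀, v₀) ∈ F_ν = {(p,v) : p + v²/(2a_m) ≤ −v_m²/(2a_m) − (ν−1)l}`. -/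
theorem state_in_F_of_late_schedule
    (a_m v_m L l t₀' T p₀ v₀ : ℝ) (ν : ℕ)
    (ha : 0 < a_m) (hvm : 0 < v_m) (hl : 0 < l) (hν : 1 ≤ ν)
    (hL : 2 * v_m ^ 2 / a_m ≤ L)
    (hT : 2 * v_m / a_m ≤ T - t₀')
    (hp0r : p₀ ∈ Set.Icc (-L) 0) (hv0r : v₀ ∈ Set.Icc 0 v_m)
    (x v : ℝ → ℝ)
    (hx : ∀ t ∈ Set.Icc t₀' T, HasDerivAt x (v t) t)
    (hLip : LipschitzOnWith (Real.toNNReal a_m) v (Set.Icc t₀' T))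
    (hvb : ∀ t ∈ Set.Icc t₀' T, 0 ≤ v t ∧ v t ≤ v_m)
    (hx0 : x t₀' = p₀) (hv0 : v t₀' = v₀)
    (hxT : x T = -(((ν : ℝ) - 1) * l)) (hvT : v T = v_m) :
    p₀ + v₀ ^ 2 / (2 * a_m) ≤ -(v_m ^ 2 / (2 * a_m)) - ((ν : ℝ) - 1) * l :=
  state_in_F_of_late_schedule_general a_m v_m l t₀' T p₀ v₀ ν ha hvm hT x v hx hLip hvb hx0 hv0 hxT
    hvT
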